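/- Let U be a hollow and uniform right R-module and put M = U², U₁ = U × 0 and U₂ = 0 × U. Then M is lifting if and only if for any right R-module X, any homomorphism f : U₁ → X and any surjective homomorphism g : U₂ → X, either (i) there exists a homomorphism h : U₁ → U₂ with f = g ∘ h, or (ii) there exist a submodule K of ker g and an injective homomorphism h : U₁ → U₂/K such that g′ ∘ h = f, where g′ : U₂/K → X is the homomorphism induced by g (g′(u + K) = g(u)). -/

import Mathlib

/-- A submodule `N` of `M` is *small* (superfluous) in `M` if `N + X ≠ M`
for every proper submodule `X` of `M`. -/
def IsSmallSubmodule {R M : Type*} [Ring R] [AddCommGroup M] [Module R M]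
    (N : Submodule R M) : Prop :=
  ∀ X : Submodule R M, X ≠ ⊤ → N ⊔ X ≠ ⊤

/-- A nonzero module `M` is *hollow* if every proper submodule of `M` is small in `M`. -/
def IsHollowModule (R M : Type*) [Ring R] [AddCommGroup M] [Module R M] : Prop :=
  Nontrivial M ∧ ∀ N : Submodule R M, N ≠ ⊤ → IsSmallSubmodule N

/-- A submodule `N` of `M` is *essential* in `M` if `N ∩ X ≠ 0`
for every nonzero submodule `X` of `M`. -/
def IsEssentialSubmodule {R M : Type*} [Ring R] [AddCommGroup M] [Module R M]
    (N : Submodule R M) : Prop :=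
  ∀ X : Submodule R M, X ≠ ⊥ → N ⊓ X ≠ ⊥

/-- A nonzero module `M` is *uniform* if every nonzero submodule of `M` is essential in `M`. -/
def IsUniformModule (R M : Type*) [Ring R] [AddCommGroup M] [Module R M] : Prop :=
  Nontrivial M ∧ ∀ N : Submodule R M, N ≠ ⊥ → IsEssentialSubmodule N

/-- `X` is a direct summand of `M`. -/
def IsDirectSummand {R M : Type*} [Ring R] [AddCommGroup M] [Module R M]
    (X : Submodule R M) : Prop :=
  ∃ Y : Submodule R M, IsCompl X Y

/-- A module `M` is *lifting* if for every submodule `N` of `M` there is a direct summand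
`X` of `M` with `X ⊆ N` such that `N/X` is small in `M/X`. -/
def IsLiftingModule (R M : Type*) [Ring R] [AddCommGroup M] [Module R M] : Prop :=
  ∀ N : Submodule R M, ∃ X : Submodule R M,
    X ≤ N ∧ IsDirectSummand X ∧ IsSmallSubmodule (N.map X.mkQ)

/-- A module `M` is *extending* if for every submodule `N` of `M` there is a direct summand
`X` of `M` such that `N` is essential in `X`. -/
def IsExtendingModule (R M : Type*) [Ring R] [AddCommGroup M] [Module R M] : Prop :=
  ∀ N : Submodule R M, ∃ X : Submodule R M,
    IsDirectSummand X ∧ N ≤ X ∧ ∀ Y : Submodule R M, Y ≤ X → Y ≠ ⊥ → N ⊓ Y ≠ ⊥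

/-- A module is *uniserial* if its submodules are linearly ordered by inclusion. -/
def IsUniserialModule (R M : Type*) [Ring R] [AddCommGroup M] [Module R M] : Prop :=
  ∀ A B : Submodule R M, A ≤ B ∨ B ≤ A

/-- An internal finite direct sum decomposition `M = ⨁ᵢ Fᵢ`. -/
def IsInternalDirectSum {R M ι : Type*} [Ring R] [AddCommGroup M] [Module R M]
    (F : ι → Submodule R M) : Prop :=
  (⨆ i, F i) = ⊤ ∧ ∀ i, Disjoint (F i) (⨆ j ∈ ({i}ᶜ : Set ι), F j)

/-- A module `M` satisfies the *finite internal exchange property* if for any direct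
summand `X` of `M` and any finite direct sum decomposition `M = M₁ ⊕ ⋯ ⊕ Mₙ` there are
submodules `Mᵢ' ⊆ Mᵢ` with `M = X ⊕ M₁' ⊕ ⋯ ⊕ Mₙ'`. -/
def SatisfiesFIEP (R M : Type*) [Ring R] [AddCommGroup M] [Module R M] : Prop :=
  ∀ (X : Submodule R M), IsDirectSummand X →
    ∀ (n : ℕ) (Mi : Fin n → Submodule R M), IsInternalDirectSum Mi →
      ∃ Mi' : Fin n → Submodule R M, (∀ i, Mi' i ≤ Mi i) ∧
        IsInternalDirectSum (fun o : Option (Fin n) => o.elim X Mi')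

universe u

/-!
Let `q : U × U → (U × U) ⧸ N` for a proper submodule `N` supplemented by `U₂`. The condition,
applied to the epimorphism `q ∘ inr` and to `q ∘ inl` (or to `q` on the diagonal when `q ∘ inl` is
not onto; the diagonal map is then onto since `(U × U) ⧸ N` is hollow), gives a hollow module `Q`
(`U` in case (i), `U ⧸ K` in case (ii), where hollowness forces the injective `h` to be onto) and
a split epimorphism `U × U → Q` through which `q` factors. Its kernel is a direct summand inside
`N`, and `N` modulo that kernel is the image of a proper submodule of the hollow `Q`, hence small.
The case where `U₁` supplements `N` is symmetric; if neither does, both projections of `N` are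
proper, so `N` is small.

Conversely, given `f` and `g`, lift `N = ker (f ⊕ g)` to a summand `D ≤ N`. Since `U₂`
supplements `N` and `N ⧸ D` is small, `U₂` supplements `D`, so `U₂ ⧸ (D ∩ U₂) ≅ (U × U) ⧸ D`, and
`f` factors through this quotient. If `D ∩ U₂ = 0` this gives (i), if `D ∩ U₁ = 0` it gives
(ii); otherwise uniformity of `U` makes `D` essential, hence `D = U × U` and `f = 0`.
-/

open LinearMap
open Submodule hiding fst snd

section General

variable {R M M₂ : Type*} [Ring R] [AddCommGroup M] [Module R M] [AddCommGroup M₂] [Module R M₂]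

theorem IsSmallSubmodule.mono {S T : Submodule R M} (hST : S ≤ T) (hT : IsSmallSubmodule T) :
    IsSmallSubmodule S := fun Y hY hSY => hT Y hY (top_unique (hSY ▸ sup_le_sup_right hST Y))

theorem IsSmallSubmodule.sup {S T : Submodule R M} (hS : IsSmallSubmodule S)
    (hT : IsSmallSubmodule T) : IsSmallSubmodule (S ⊔ T) := by
  intro Y hY hSTY
  rw [sup_assoc] at hSTY
  by_cases hTY : T ⊔ Y = ⊤
  · exact hT Y hY hTY
  · exact hS _ hTY hSTY

theorem IsSmallSubmodule.map {S : Submodule R M} (hS : IsSmallSubmodule S) (f : M →ₗ[R] M₂) :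
    IsSmallSubmodule (S.map f) := by
  intro Y hY hSY
  have hcomap : S ⊔ Y.comap f = ⊤ := by
    refine eq_top_iff.mpr fun m _ => ?_
    obtain ⟨_, ⟨s, hs, rfl⟩, y, hy, hsy⟩ := mem_sup.mp (hSY ▸ mem_top : f m ∈ S.map f ⊔ Y)
    have hms : m - s ∈ Y.comap f := by
      rw [mem_comap, map_sub, ← hsy, add_sub_cancel_left]
      exact hy
    simpa using add_mem_sup hs hms
  have hSfY : S.map f ≤ Y := by
    by_contra hle
    exact hS (Y.comap f) (fun htop => hle (map_le_iff_le_comap.mpr (le_top.trans_eq htop.symm)))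
      hcomap
  exact hY (sup_eq_right.mpr hSfY ▸ hSY)

theorem IsSmallSubmodule.of_map_fst_of_map_snd {N : Submodule R (M × M₂)}
    (h₁ : IsSmallSubmodule (N.map (fst R M M₂))) (h₂ : IsSmallSubmodule (N.map (snd R M M₂))) :
    IsSmallSubmodule N := by
  refine ((h₁.map (inl R M M₂)).sup (h₂.map (inr R M M₂))).mono fun x hx => ?_
  rw [← Prod.fst_add_snd x]
  exact add_mem_sup ⟨_, ⟨x, hx, rfl⟩, rfl⟩ ⟨_, ⟨x, hx, rfl⟩, rfl⟩

theorem IsSmallSubmodule.sup_eq_top_of_map_mkQ {D N B : Submodule R M}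
    (hN : IsSmallSubmodule (N.map D.mkQ)) (hNB : N ⊔ B = ⊤) : D ⊔ B = ⊤ := by
  rw [← map_mkQ_eq_top]
  by_contra hne
  exact hN _ hne (by rw [← Submodule.map_sup, hNB, Submodule.map_top, range_mkQ])

theorem ker_sup_range_eq_top_of_surjective_comp {P : Type*} [AddCommGroup P] [Module R P]
    (F : M →ₗ[R] M₂) (i : P →ₗ[R] M) (hFi : Function.Surjective (F ∘ₗ i)) :
    ker F ⊔ range i = ⊤ := by
  rw [sup_comm, ← comap_map_eq, ← range_comp, range_eq_top.mpr hFi, comap_top]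

theorem surjective_mkQ_comp_inr_of_map_fst_eq_top {N : Submodule R (M × M₂)}
    (h : N.map (fst R M M₂) = ⊤) : Function.Surjective (N.mkQ ∘ₗ inr R M M₂) := by
  rw [← range_eq_top, range_comp, range_inr, map_mkQ_eq_top, ← comap_map_eq, h,
    comap_top]

theorem surjective_mkQ_comp_inl_of_map_snd_eq_top {N : Submodule R (M × M₂)}
    (h : N.map (snd R M M₂) = ⊤) : Function.Surjective (N.mkQ ∘ₗ inl R M M₂) := by
  rw [← range_eq_top, range_comp, range_inl, map_mkQ_eq_top, ← comap_map_eq, h,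
    comap_top]

theorem IsHollowModule.eq_top_of_sup_eq_top (hM : IsHollowModule R M) {A B : Submodule R M}
    (hAB : A ⊔ B = ⊤) (hB : B ≠ ⊤) : A = ⊤ := by
  by_contra hA
  exact hM.2 A hA B hB hAB

theorem IsHollowModule.of_surjective (hM : IsHollowModule R M) [Nontrivial M₂] {π : M →ₗ[R] M₂}
    (hπ : Function.Surjective π) : IsHollowModule R M₂ := by
  refine ⟨inferInstance, fun Y hY => ?_⟩
  have hsmall := (hM.2 (Y.comap π) fun h => hY (by
    rw [← map_comap_eq_of_surjective hπ Y, h, Submodule.map_top, range_eq_top.mpr hπ])).map π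
  rwa [map_comap_eq_of_surjective hπ] at hsmall

theorem IsHollowModule.quotient (hM : IsHollowModule R M) {K : Submodule R M} (hK : K ≠ ⊤) :
    IsHollowModule R (M ⧸ K) :=
  haveI := Submodule.Quotient.nontrivial_iff.mpr hK
  hM.of_surjective K.mkQ_surjective

theorem IsHollowModule.surjective_of_surjective_comp {Q Y : Type*} [AddCommGroup Q] [Module R Q]
    [AddCommGroup Y] [Module R Y] [Nontrivial Y] (hQ : IsHollowModule R Q) (k : M →ₗ[R] Q)
    (G : Q →ₗ[R] Y) (hGk : Function.Surjective (G ∘ₗ k)) : Function.Surjective k := by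
  have hsup : range k ⊔ ker G = ⊤ := by
    rw [sup_comm]
    exact ker_sup_range_eq_top_of_surjective_comp G k hGk
  have hker : ker G ≠ ⊤ := fun h => by
    obtain ⟨y, hy⟩ := exists_ne (0 : Y)
    obtain ⟨m, rfl⟩ := hGk y
    exact hy (ker_eq_top.mp h ▸ rfl)
  exact range_eq_top.mp (hQ.eq_top_of_sup_eq_top hsup hker)

theorem IsUniformModule.exists_smul_mem_ne_zero (hM : IsUniformModule R M) {A : Submodule R M}
    (hA : A ≠ ⊥) {x : M} (hx : x ≠ 0) : ∃ r : R, r • x ∈ A ∧ r • x ≠ 0 := by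
  obtain ⟨y, hy, hy0⟩ := exists_mem_ne_zero_of_ne_bot
    (hM.2 A hA (R ∙ x) (by simpa [span_singleton_eq_bot] using hx))
  obtain ⟨r, rfl⟩ := mem_span_singleton.mp (mem_inf.mp hy).2
  exact ⟨r, (mem_inf.mp hy).1, hy0⟩

theorem IsEssentialSubmodule.eq_top_of_isDirectSummand {D : Submodule R M}
    (hD : IsEssentialSubmodule D) (hDs : IsDirectSummand D) : D = ⊤ := by
  obtain ⟨C, hDC⟩ := hDs
  by_contra hD'
  exact hD C (fun hC => hD' (eq_top_of_isCompl_bot (hC ▸ hDC))) hDC.inf_eq_bot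

end General

section Lifting

variable {R M M₂ : Type*} [Ring R] [AddCommGroup M] [Module R M] [AddCommGroup M₂] [Module R M₂]

def LiftsToSummand (N : Submodule R M) : Prop :=
  ∃ X : Submodule R M, X ≤ N ∧ IsDirectSummand X ∧ IsSmallSubmodule (N.map X.mkQ)

theorem isDirectSummand_ker_of_bijective_comp {Q P : Type*} [AddCommGroup Q] [Module R Q]
    [AddCommGroup P] [Module R P] (φ : M →ₗ[R] Q) (c : P →ₗ[R] M)
    (hc : Function.Bijective (φ ∘ₗ c)) : IsDirectSummand (ker φ) := by
  let s := c ∘ₗ (LinearEquiv.ofBijective _ hc).symm.toLinearMap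
  have hφs : φ ∘ₗ s = LinearMap.id := by
    ext q
    exact (LinearEquiv.ofBijective _ hc).apply_symm_apply q
  have hidem : IsIdempotentElem (s ∘ₗ φ) := by
    change s ∘ₗ (φ ∘ₗ s) ∘ₗ φ = s ∘ₗ φ
    rw [hφs, LinearMap.id_comp]
  have hker : ker (s ∘ₗ φ) = ker φ :=
    ker_comp_of_ker_eq_bot _ (ker_eq_bot_of_inverse hφs)
  exact ⟨_, hker ▸ hidem.isCompl.symm⟩

theorem liftsToSummand_top : LiftsToSummand (⊤ : Submodule R M) :=
  ⟨⊤, le_rfl, ⟨⊥, isCompl_top_bot⟩, fun Y hY => absurd (Subsingleton.elim Y ⊤) hY⟩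

theorem LiftsToSummand.of_isSmall {N : Submodule R M} (hN : IsSmallSubmodule N) :
    LiftsToSummand N :=
  ⟨⊥, bot_le, ⟨⊤, isCompl_bot_top⟩, hN.map _⟩

theorem LiftsToSummand.of_map_equiv {N : Submodule R M} (e : M ≃ₗ[R] M₂)
    (hN : LiftsToSummand (N.map e.toLinearMap)) : LiftsToSummand N := by
  obtain ⟨X, hXN, ⟨C, hXC⟩, hsmall⟩ := hN
  let ρ := X.mapQ (X.comap e.toLinearMap) e.symm.toLinearMap (fun x hx => by simpa using hx)
  have hρ : ρ ∘ₗ X.mkQ ∘ₗ e.toLinearMap = (X.comap e.toLinearMap).mkQ := by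
    ext m
    simp [ρ]
  refine ⟨X.comap e.toLinearMap, fun m hm => by simpa using hXN hm, ⟨C.comap e.toLinearMap, ?_⟩, ?_⟩
  · exact (orderIsoMapComap e).symm.isCompl hXC
  · have := hsmall.map ρ
    rwa [← Submodule.map_comp, ← Submodule.map_comp, LinearMap.comp_assoc, hρ] at this

theorem liftsToSummand_of_mkQ_eq_comp {Q P : Type*} [AddCommGroup Q] [Module R Q]
    [AddCommGroup P] [Module R P] (hQ : IsHollowModule R Q) {N : Submodule R M} (hN : N ≠ ⊤)
    (φ : M →ₗ[R] Q) (G : Q →ₗ[R] M ⧸ N) (hφG : N.mkQ = G ∘ₗ φ) (c : P →ₗ[R] M)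
    (hc : Function.Bijective (φ ∘ₗ c)) : LiftsToSummand N := by
  have hφ : Function.Surjective φ := fun q => ⟨c _, (hc.2 q).choose_spec⟩
  have hkerN : ker φ ≤ N := by
    rw [← N.ker_mkQ, hφG, ker_comp]
    exact comap_mono bot_le
  refine ⟨ker φ, hkerN, isDirectSummand_ker_of_bijective_comp φ c hc, ?_⟩
  have hNφ : N.map φ ≠ ⊤ := fun h => hN (by
    rw [← sup_eq_left.mpr hkerN, ← comap_map_eq, h, comap_top])
  have hmkQ : (φ.quotKerEquivOfSurjective hφ).symm.toLinearMap ∘ₗ φ = (ker φ).mkQ := by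
    ext m
    simp
  simpa only [← Submodule.map_comp, hmkQ] using
    (hQ.2 _ hNφ).map (φ.quotKerEquivOfSurjective hφ).symm.toLinearMap

end Lifting

def LiftsOrEmbedsOver (R : Type*) [Ring R] (A B : Type u) [AddCommGroup A] [Module R A]
    [AddCommGroup B] [Module R B] : Prop :=
  ∀ (X : Type u) [AddCommGroup X] [Module R X] (f : A →ₗ[R] X) (g : B →ₗ[R] X),
    Function.Surjective g →
      (∃ h : A →ₗ[R] B, f = g ∘ₗ h) ∨
      (∃ (K : Submodule R B) (hK : K ≤ LinearMap.ker g) (h : A →ₗ[R] B ⧸ K),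
        Function.Injective h ∧ (K.liftQ g hK) ∘ₗ h = f)

theorem LiftsOrEmbedsOver.of_linearEquiv {R : Type*} [Ring R] {A B A' B' : Type u}
    [AddCommGroup A] [Module R A] [AddCommGroup B] [Module R B] [AddCommGroup A'] [Module R A']
    [AddCommGroup B'] [Module R B'] (hP : LiftsOrEmbedsOver R A B) (e₁ : A ≃ₗ[R] A')
    (e₂ : B ≃ₗ[R] B') : LiftsOrEmbedsOver R A' B' := by
  intro X _ _ f g hg
  rcases hP X (f ∘ₗ e₁.toLinearMap) (g ∘ₗ e₂.toLinearMap) (hg.comp e₂.surjective) with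
    ⟨h, hh⟩ | ⟨K, hK, h, hinj, hh⟩
  · refine .inl ⟨e₂.toLinearMap ∘ₗ h ∘ₗ e₁.symm.toLinearMap, ?_⟩
    ext a
    simpa using LinearMap.congr_fun hh (e₁.symm a)
  · have hK' : K.map e₂.toLinearMap ≤ ker g := map_le_iff_le_comap.mpr (by rwa [← ker_comp])
    let q := Submodule.Quotient.equiv K (K.map e₂.toLinearMap) e₂ rfl
    have hq : (K.map e₂.toLinearMap).liftQ g hK' ∘ₗ q.toLinearMap = K.liftQ _ hK := by
      ext
      simp [q]
    refine .inr ⟨_, hK', q.toLinearMap ∘ₗ h ∘ₗ e₁.symm.toLinearMap,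
      q.injective.comp (hinj.comp e₁.symm.injective), ?_⟩
    rw [← comp_assoc, ← comp_assoc, hq, hh]
    ext
    simp

section Square

variable {R : Type*} {U : Type u} [Ring R] [AddCommGroup U] [Module R U]

theorem liftsToSummand_of_factor (hH : IsHollowModule R U) {N : Submodule R (U × U)}
    (hN : N ≠ ⊤) (t h : U →ₗ[R] U)
    (hh : N.mkQ ∘ₗ (inl R U U + inr R U U ∘ₗ t) = N.mkQ ∘ₗ inr R U U ∘ₗ h) :
    LiftsToSummand N := by
  refine liftsToSummand_of_mkQ_eq_comp hH hN (snd R U U + (h - t) ∘ₗ fst R U U)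
    (N.mkQ ∘ₗ inr R U U) ?_ (inr R U U) ?_
  · ext a
    · have hha := LinearMap.congr_fun hh a
      simp only [comp_apply, LinearMap.add_apply, inl_apply, inr_apply, mkQ_apply,
        Prod.mk_add_mk, add_zero, zero_add, Submodule.Quotient.eq] at hha
      simp only [comp_apply, LinearMap.add_apply, LinearMap.sub_apply, inl_apply, inr_apply,
        mkQ_apply, fst_apply, snd_apply, zero_add, Submodule.Quotient.eq]
      convert hha using 1
      ext <;> simp
    · simp
  · convert Function.bijective_id
    ext u
    simp

theorem liftsToSummand_of_embed (hH : IsHollowModule R U) {N : Submodule R (U × U)}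
    (hN : N ≠ ⊤) (t : U →ₗ[R] U) (ht : Function.Surjective (N.mkQ ∘ₗ (inl R U U + inr R U U ∘ₗ t)))
    {K : Submodule R U} (hK : K ≤ ker (N.mkQ ∘ₗ inr R U U)) (k : U →ₗ[R] U ⧸ K)
    (hk : Function.Injective k) (hkf : K.liftQ _ hK ∘ₗ k = N.mkQ ∘ₗ (inl R U U + inr R U U ∘ₗ t)) :
    LiftsToSummand N := by
  have hKtop : K ≠ ⊤ := by
    rintro rfl
    obtain ⟨x, y, hxy⟩ := hH.1
    exact hxy (hk (Subsingleton.elim _ _))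
  have := Submodule.Quotient.nontrivial_iff.mpr hN
  have hQ := hH.quotient hKtop
  refine liftsToSummand_of_mkQ_eq_comp hQ hN
    (k ∘ₗ fst R U U + K.mkQ ∘ₗ (snd R U U - t ∘ₗ fst R U U)) (K.liftQ _ hK) ?_
    (inl R U U + inr R U U ∘ₗ t) ?_
  · ext a
    · have hka := LinearMap.congr_fun hkf a
      simp only [comp_apply, LinearMap.add_apply, inl_apply, inr_apply, mkQ_apply,
        Prod.mk_add_mk, add_zero, zero_add] at hka
      simp [hka, ← sub_eq_add_neg, ← Submodule.Quotient.mk_sub]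
    · simp
  · have hbij : Function.Bijective k := ⟨hk, hQ.surjective_of_surjective_comp k _ (hkf ▸ ht)⟩
    convert hbij using 2
    ext u
    simp

theorem LiftsOrEmbedsOver.liftsToSummand (hP : LiftsOrEmbedsOver R U U)
    (hH : IsHollowModule R U) {N : Submodule R (U × U)} (hN : N ≠ ⊤)
    (hg : Function.Surjective (N.mkQ ∘ₗ inr R U U)) : LiftsToSummand N := by
  have := Submodule.Quotient.nontrivial_iff.mpr hN
  have hQ : IsHollowModule R ((U × U) ⧸ N) := hH.of_surjective hg
  -- Replace `N.mkQ ∘ₗ inl` by a surjective map, using the diagonal if necessary.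
  obtain ⟨t, ht⟩ : ∃ t : U →ₗ[R] U,
      Function.Surjective (N.mkQ ∘ₗ (inl R U U + inr R U U ∘ₗ t)) := by
    by_cases hf : Function.Surjective (N.mkQ ∘ₗ inl R U U)
    · exact ⟨0, by simpa using hf⟩
    refine ⟨LinearMap.id, range_eq_top.mp (hQ.eq_top_of_sup_eq_top ?_ (mt range_eq_top.mp hf))⟩
    refine eq_top_iff.mpr fun y _ => ?_
    obtain ⟨u, rfl⟩ := hg y
    have hu : (N.mkQ ∘ₗ inr R U U) u =
        (N.mkQ ∘ₗ (inl R U U + inr R U U ∘ₗ LinearMap.id)) u - (N.mkQ ∘ₗ inl R U U) u := by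
      simp [← Submodule.Quotient.mk_sub]
    rw [hu]
    exact sub_mem_sup (mem_range_self _ u) (mem_range_self _ u)
  rcases hP _ _ _ hg with ⟨h, hh⟩ | ⟨K, hK, k, hk, hkf⟩
  · exact liftsToSummand_of_factor hH hN t h hh
  · exact liftsToSummand_of_embed hH hN t ht hK k hk hkf

theorem LiftsOrEmbedsOver.isLiftingModule (hP : LiftsOrEmbedsOver R U U)
    (hH : IsHollowModule R U) : IsLiftingModule R (U × U) := by
  intro N
  change LiftsToSummand N
  by_cases hN : N = ⊤
  · exact hN ▸ liftsToSummand_top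
  by_cases hinr : Function.Surjective (N.mkQ ∘ₗ inr R U U)
  · exact hP.liftsToSummand hH hN hinr
  by_cases hinl : Function.Surjective (N.mkQ ∘ₗ inl R U U)
  · let e := LinearEquiv.prodComm R U U
    let q := Submodule.Quotient.equiv N (N.map e.toLinearMap) e rfl
    have hq : (N.map e.toLinearMap).mkQ ∘ₗ inr R U U = q.toLinearMap ∘ₗ N.mkQ ∘ₗ inl R U U := by
      ext u
      simp [q, e]
    refine .of_map_equiv e (hP.liftsToSummand hH (Submodule.map_ne_top_iff.mpr hN) ?_)
    rw [hq]
    exact q.surjective.comp hinl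
  exact .of_isSmall (.of_map_fst_of_map_snd
    (hH.2 _ (mt surjective_mkQ_comp_inr_of_map_fst_eq_top hinr))
    (hH.2 _ (mt surjective_mkQ_comp_inl_of_map_snd_eq_top hinl)))

theorem IsUniformModule.isEssentialSubmodule_of_comap_ne_bot (hU : IsUniformModule R U)
    {D : Submodule R (U × U)} (h₁ : D.comap (inl R U U) ≠ ⊥) (h₂ : D.comap (inr R U U) ≠ ⊥) :
    IsEssentialSubmodule D := by
  suffices key : ∀ w : U × U, w ≠ 0 → ∃ r : R, r • w ∈ D ∧ r • w ≠ 0 by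
    intro W hW hDW
    obtain ⟨w, hw, hw0⟩ := exists_mem_ne_zero_of_ne_bot hW
    obtain ⟨r, hrD, hr0⟩ := key w hw0
    exact hr0 ((mem_bot R).mp (hDW ▸ mem_inf.mpr ⟨hrD, W.smul_mem r hw⟩))
  have of_snd_mem (w : U × U) (hw : w ≠ 0) (hw₂ : w.2 ∈ D.comap (inr R U U)) :
      ∃ r : R, r • w ∈ D ∧ r • w ≠ 0 := by
    by_cases hw₁ : w.1 = 0
    · refine ⟨1, ?_, by simpa using hw⟩
      rwa [one_smul, ← Prod.mk.eta (p := w), hw₁]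
    obtain ⟨r, hr, hr0⟩ := hU.exists_smul_mem_ne_zero h₁ hw₁
    refine ⟨r, ?_, fun h => hr0 (by simpa using congr_arg Prod.fst h)⟩
    have hrw : r • w = inl R U U (r • w.1) + inr R U U (r • w.2) := by ext <;> simp
    rw [hrw]
    exact add_mem hr (smul_mem _ r hw₂)
  intro w hw
  by_cases hw₂ : w.2 = 0
  · exact of_snd_mem w hw (hw₂ ▸ zero_mem _)
  obtain ⟨r, hr, hr0⟩ := hU.exists_smul_mem_ne_zero h₂ hw₂
  obtain ⟨s, hs, hs0⟩ := of_snd_mem (r • w) (fun h => hr0 (by simpa using congr_arg Prod.snd h)) hr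
  exact ⟨s * r, by rwa [mul_smul], by rwa [mul_smul]⟩

theorem IsLiftingModule.liftsOrEmbedsOver (hL : IsLiftingModule R (U × U))
    (hU : IsUniformModule R U) : LiftsOrEmbedsOver R U U := by
  intro X _ _ f g hg
  let F := f.coprod g
  obtain ⟨D, hDF, hDs, hsmall⟩ := hL (ker F)
  let θ := D.mkQ ∘ₗ inr R U U
  have hθ : Function.Surjective θ := by
    have hF := ker_sup_range_eq_top_of_surjective_comp F (inr R U U) (by rwa [coprod_inr])
    rw [← range_eq_top, range_comp, map_mkQ_eq_top]
    exact hsmall.sup_eq_top_of_map_mkQ hF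
  let G := D.liftQ F hDF
  let e := θ.quotKerEquivOfSurjective hθ
  have hK : ker θ ≤ ker g := by
    have hGθ : G ∘ₗ θ = g := by
      ext
      simp [G, θ, F]
    exact hGθ ▸ ker_le_ker_comp θ G
  let h := e.symm.toLinearMap ∘ₗ D.mkQ ∘ₗ inl R U U
  have hgh : (ker θ).liftQ g hK ∘ₗ h = f := by
    have hge : (ker θ).liftQ g hK = G ∘ₗ e.toLinearMap := by
      ext
      simp [G, e, θ, F]
    rw [hge]
    ext u
    simp [h, G, F]
  by_cases hK0 : ker θ = ⊥
  · refine .inl ⟨((ker θ).quotEquivOfEqBot hK0).toLinearMap ∘ₗ h, ?_⟩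
    have hq : g ∘ₗ ((ker θ).quotEquivOfEqBot hK0).toLinearMap = (ker θ).liftQ g hK := by
      ext
      simp
    rw [← comp_assoc, hq, hgh]
  by_cases hinl : D.comap (inl R U U) = ⊥
  · refine .inr ⟨ker θ, hK, h, e.symm.injective.comp ?_, hgh⟩
    rw [← ker_eq_bot, ker_comp, ker_mkQ, hinl]
  · have hinr : D.comap (inr R U U) ≠ ⊥ := by rwa [ker_comp, ker_mkQ] at hK0
    have hD : D = ⊤ :=
      (hU.isEssentialSubmodule_of_comap_ne_bot hinl hinr).eq_top_of_isDirectSummand hDs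
    have hF : F = 0 := ker_eq_top.mp (top_le_iff.mp (hD ▸ hDF))
    refine .inl ⟨0, ?_⟩
    rw [comp_zero, ← coprod_inl f g, show f.coprod g = 0 from hF, zero_comp]

end Square

/-- Let `U` be hollow and uniform, `M = U²`, `U₁ = U × 0`, `U₂ = 0 × U`. Then `M` is
lifting if and only if for every module `X`, every homomorphism `f : U₁ → X` and every
surjective homomorphism `g : U₂ → X`, either (i) there is `h : U₁ → U₂` with `f = g ∘ h`,
or (ii) there are a submodule `K` of `ker g` and an injective homomorphism
`h : U₁ → U₂/K` such that `g' ∘ h = f`, where `g' : U₂/K → X` is induced by `g`. -/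
theorem stmt_6 {R : Type*} {U : Type u} [Ring R] [AddCommGroup U] [Module R U]
    (hH : IsHollowModule R U) (hU : IsUniformModule R U) :
    IsLiftingModule R (U × U) ↔
    (∀ (X : Type u) [AddCommGroup X] [Module R X]
      (f : ↥(Submodule.fst R U U) →ₗ[R] X) (g : ↥(Submodule.snd R U U) →ₗ[R] X),
      Function.Surjective g →
        (∃ h : ↥(Submodule.fst R U U) →ₗ[R] ↥(Submodule.snd R U U), f = g ∘ₗ h) ∨
        (∃ (K : Submodule R ↥(Submodule.snd R U U)) (hK : K ≤ LinearMap.ker g)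
            (h : ↥(Submodule.fst R U U) →ₗ[R] (↥(Submodule.snd R U U) ⧸ K)),
          Function.Injective h ∧ (K.liftQ g hK) ∘ₗ h = f)) := by
  change _ ↔ LiftsOrEmbedsOver R (Submodule.fst R U U) (Submodule.snd R U U)
  let e₁ := Submodule.fstEquiv R U U
  let e₂ := Submodule.sndEquiv R U U
  exact ⟨fun hL => (hL.liftsOrEmbedsOver hU).of_linearEquiv e₁.symm e₂.symm,
    fun hP => (hP.of_linearEquiv e₁ e₂).isLiftingModule hH⟩
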